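/- For each integer d ≥ 3, define g_d(z) = (2−d)/d − log(d z²/2) + ((d−1)/2) z² − 2/(d² z²) and z_d(x) = (x − √(x² − 4(d−1))) / ((d−1)√(2d)) for x ≥ 2√(d−1). If x_d ≥ 2√(d−1) is any sequence satisfying g_d(z_d(x_d)) = 0 for each d, then the quantity μ_d = x_d √(2/d) satisfies μ_d² = 2 log d + 2 log log d + 2 + o(1) as d → ∞; that is, μ_d² − (2 log d + 2 log log d + 2) → 0. -/

import Mathlib

/-!
Put `L = 2/(d² z²)` with `z = z_d(x_d)`. The equation `g_d(z) = 0` becomes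
`L - log L = log d - 1 + 2/d + (d-1)/(d² L)`, and since `a = x_d - √(x_d² - 4(d-1))` solves
`a² - 2 a x_d + 4(d-1) = 0`, also `μ_d² = 2L + 4(d-1)/d + 2(d-1)²/(d² L)`. Eliminating `L - log L`,
`μ_d² - (2 log d + 2 log log d + 2) = 2 log (L / log d) + 2 (1 - 1/d) / L`.
The constraint `x_d ≥ 2√(d-1)` gives `a² ≤ 4(d-1)`, i.e. `L ≥ (d-1)/d`, which selects the large root
of `L - log L ≈ log d`: `log d - 1 ≤ L ≤ log d + log 2 + log log d`. Both error terms then tend to `0`.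
-/

open Filter

noncomputable section

/-- `g_d(z) = (2-d)/d - log(d z²/2) + ((d-1)/2) z² - 2/(d² z²)`. -/
def gfun (d : ℕ) (z : ℝ) : ℝ :=
  (2 - (d:ℝ)) / d - Real.log ((d:ℝ) * z^2 / 2) + ((d:ℝ) - 1) / 2 * z^2 - 2 / ((d:ℝ)^2 * z^2)

/-- `z_d(x) = (x - √(x² - 4(d-1))) / ((d-1)√(2d))`. -/
def zfun (d : ℕ) (x : ℝ) : ℝ :=
  (x - Real.sqrt (x^2 - 4*((d:ℝ) - 1))) / (((d:ℝ) - 1) * Real.sqrt (2*(d:ℝ)))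

open Real

lemma sub_sqrt_sq_sub_four_mul_spec {a c x : ℝ} (hc : 0 < c) (hx : 2 * √c ≤ x)
    (ha : a = x - √(x ^ 2 - 4 * c)) :
    0 < a ∧ a ^ 2 ≤ 4 * c ∧ 2 * a * x = a ^ 2 + 4 * c := by
  have hx0 : 0 < x := lt_of_lt_of_le (by positivity) hx
  have hx2 : 4 * c ≤ x ^ 2 := by nlinarith [sq_sqrt hc.le, sqrt_nonneg c]
  set y := √(x ^ 2 - 4 * c)
  have hy2 : y ^ 2 = x ^ 2 - 4 * c := sq_sqrt (by linarith)
  have hy0 : 0 ≤ y := sqrt_nonneg _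
  have hyx : y < x := by nlinarith
  refine ⟨by linarith, ?_, ?_⟩
  · nlinarith
  · rw [ha]; linear_combination -hy2

lemma sub_one_le_of_le_sub_log {L ℓ : ℝ} (hL : 1 / 2 ≤ L) (hℓ : 3 ≤ ℓ) (h : ℓ - 1 ≤ L - log L) :
    ℓ - 1 ≤ L := by
  have hL0 : 0 < L := by linarith
  have hlog : -1 ≤ log L := by
    have := one_sub_inv_le_log_of_pos hL0
    have : L⁻¹ ≤ 2 := by rw [inv_le_comm₀ hL0 two_pos]; linarith
    linarith
  have hlog0 : 0 ≤ log L := log_nonneg (by linarith)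
  linarith

lemma le_add_log_of_sub_log_le {L ℓ : ℝ} (hL : 0 < L) (h : L - log L ≤ ℓ) :
    L ≤ ℓ + log 2 + log ℓ := by
  have hlog_half : log L ≤ L / 2 := by
    have h1 := log_le_sub_one_of_pos (half_pos hL)
    rw [log_div hL.ne' two_ne_zero] at h1
    linarith [log_two_lt_d9]
  have hℓ : 0 < ℓ := by linarith
  have hlog : log L ≤ log 2 + log ℓ := by
    rw [← log_mul two_ne_zero hℓ.ne']
    exact log_le_log hL (by linarith)
  linarith

lemma tendsto_div_nhds_one_of_mem_Icc {α : Type*} {l : Filter α} {f g : α → ℝ}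
    (hg : Tendsto g l atTop) (hf : ∀ᶠ a in l, f a ∈ Set.Icc (g a - 1) (g a + log 2 + log (g a))) :
    Tendsto (fun a => f a / g a) l (nhds 1) := by
  have hinv : Tendsto (fun a => (g a)⁻¹) l (nhds 0) := hg.inv_tendsto_atTop
  have hlow : Tendsto (fun a => 1 - (g a)⁻¹) l (nhds 1) := by
    simpa using hinv.const_sub 1
  have hup : Tendsto (fun a => 1 + log 2 * (g a)⁻¹ + log (g a) / g a) l (nhds 1) := by
    simpa using ((hinv.const_mul (log 2)).const_add 1).add
      (isLittleO_log_id_atTop.tendsto_div_nhds_zero.comp hg)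
  refine tendsto_of_tendsto_of_tendsto_of_le_of_le' hlow hup ?_ ?_ <;>
    filter_upwards [hf, hg.eventually_gt_atTop 0] with a ⟨hlo, hhi⟩ hpos
  · rw [le_div_iff₀ hpos, sub_mul, inv_mul_cancel₀ hpos.ne']
    linarith
  · rw [div_le_iff₀ hpos, add_mul, add_mul, mul_assoc, inv_mul_cancel₀ hpos.ne',
      div_mul_cancel₀ _ hpos.ne']
    linarith

def lfun (d : ℕ) (z : ℝ) : ℝ := 2 / ((d:ℝ) ^ 2 * z ^ 2)

lemma gfun_eq {d : ℕ} (hd : d ≠ 0) {z : ℝ} (hz : z ≠ 0) :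
    gfun d z = log d - 1 + 2 / d + (d - 1) / (d ^ 2 * lfun d z) - (lfun d z - log (lfun d z)) := by
  have hlog : log ((d:ℝ) * z ^ 2 / 2) = - log d - log (lfun d z) := by
    rw [lfun, log_div (by positivity) (by positivity), log_div (by positivity) (by positivity),
      log_mul (by positivity) (by positivity), log_mul (by positivity) (by positivity), log_pow,
      log_pow]
    push_cast
    ring
  rw [gfun, hlog]
  unfold lfun
  field_simp
  ring

lemma lfun_zfun_eq {d : ℕ} (hd : 2 ≤ d) (x : ℝ) :
    lfun d (zfun d x) = 4 * (d - 1) ^ 2 / (d * (x - √(x ^ 2 - 4 * (d - 1))) ^ 2) := by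
  have hd1 : (1:ℝ) < d := by exact_mod_cast hd
  rw [lfun, zfun, div_pow, mul_pow, sq_sqrt (by positivity)]
  field_simp
  ring

section

variable {d : ℕ} {x : ℝ} (hd : 2 ≤ d) (hx : 2 * √((d:ℝ) - 1) ≤ x)
include hd hx

lemma zfun_pos : 0 < zfun d x := by
  have hd1 : (1:ℝ) < d := by exact_mod_cast hd
  obtain ⟨ha, -, -⟩ := sub_sqrt_sq_sub_four_mul_spec (sub_pos.2 hd1) hx rfl
  exact div_pos ha (by positivity)

lemma div_le_lfun_zfun : ((d:ℝ) - 1) / d ≤ lfun d (zfun d x) := by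
  have hd1 : (1:ℝ) < d := by exact_mod_cast hd
  obtain ⟨ha, ha2, -⟩ := sub_sqrt_sq_sub_four_mul_spec (sub_pos.2 hd1) hx rfl
  rw [lfun_zfun_eq hd, div_le_div_iff₀ (by positivity) (by positivity)]
  nlinarith [mul_le_mul_of_nonneg_left ha2 (sub_pos.2 hd1).le]

lemma sq_mul_sqrt_two_div_eq :
    (x * √(2 / d)) ^ 2 = 2 * lfun d (zfun d x) + 4 * (d - 1) / d
      + 2 * (d - 1) ^ 2 / (d ^ 2 * lfun d (zfun d x)) := by
  have hd1 : (1:ℝ) < d := by exact_mod_cast hd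
  obtain ⟨ha, -, hax⟩ := sub_sqrt_sq_sub_four_mul_spec (sub_pos.2 hd1) hx rfl
  rw [lfun_zfun_eq hd, mul_pow, sq_sqrt (by positivity)]
  set a := x - √(x ^ 2 - 4 * ((d:ℝ) - 1))
  have hx' : x = (a ^ 2 + 4 * (d - 1)) / (2 * a) := by
    rw [eq_div_iff (by positivity)]; linear_combination hax
  have hd1' : (d:ℝ) - 1 ≠ 0 := by linarith
  rw [hx']
  field_simp
  ring

variable (hroot : gfun d (zfun d x) = 0)
include hroot

lemma sub_log_lfun_zfun_eq :
    lfun d (zfun d x) - log (lfun d (zfun d x))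
      = log d - 1 + 2 / d + (d - 1) / (d ^ 2 * lfun d (zfun d x)) := by
  have h := gfun_eq (d := d) (by omega) (zfun_pos hd hx).ne'
  linarith

lemma sq_mul_sqrt_two_div_sub_eq :
    (x * √(2 / d)) ^ 2 - (2 * log d + 2 * log (log d) + 2)
      = 2 * log (lfun d (zfun d x) / log d) + 2 * (1 - (d:ℝ)⁻¹) / lfun d (zfun d x) := by
  have hd1 : (1:ℝ) < d := by exact_mod_cast hd
  have hL := sub_log_lfun_zfun_eq hd hx hroot
  set L := lfun d (zfun d x)
  have hL0 : 0 < L := lt_of_lt_of_le (by positivity) (div_le_lfun_zfun hd hx)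
  have key : 4 * (d - 1) / d + 2 * (d - 1) ^ 2 / (d ^ 2 * L)
      = 4 - 2 * (2 / d + (d - 1) / (d ^ 2 * L)) + 2 * (1 - (d:ℝ)⁻¹) / L := by
    field_simp
    ring
  rw [sq_mul_sqrt_two_div_eq hd hx, log_div hL0.ne' (log_pos hd1).ne']
  linarith

lemma sub_log_lfun_zfun_mem_Icc (hd3 : 3 ≤ d) :
    lfun d (zfun d x) - log (lfun d (zfun d x)) ∈ Set.Icc (log d - 1) (log d) := by
  have hd3' : (3:ℝ) ≤ d := by exact_mod_cast hd3
  have hd0 : (0:ℝ) < d := by linarith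
  have hLd := div_le_lfun_zfun hd hx
  set L := lfun d (zfun d x)
  have hL0 : 0 < L := lt_of_lt_of_le (div_pos (by linarith) hd0) hLd
  have hε : (d - 1) / (d ^ 2 * L) ≤ 1 / d := by
    rw [div_le_div_iff₀ (by positivity) (by positivity)]
    rw [div_le_iff₀ hd0] at hLd
    nlinarith
  have h3d : 3 / (d:ℝ) ≤ 1 := by rw [div_le_one (by positivity)]; exact hd3'
  rw [sub_log_lfun_zfun_eq hd hx hroot]
  constructor
  · have : 0 ≤ (d - 1) / (d ^ 2 * L) := div_nonneg (by linarith) (by positivity)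
    have : (0:ℝ) ≤ 2 / d := by positivity
    linarith
  · have : 2 / (d:ℝ) + 1 / d = 3 / d := by ring
    linarith

end

lemma lfun_zfun_mem_Icc {d : ℕ} {x : ℝ} (hd : 3 ≤ d) (hℓ : 3 ≤ log d)
    (hx : 2 * √((d:ℝ) - 1) ≤ x) (hroot : gfun d (zfun d x) = 0) :
    lfun d (zfun d x) ∈ Set.Icc (log d - 1) (log d + log 2 + log (log d)) := by
  have hd2 : 2 ≤ d := by omega
  have hd' : (3:ℝ) ≤ d := by exact_mod_cast hd
  have hL : (1:ℝ) / 2 ≤ lfun d (zfun d x) :=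
    le_trans (by rw [le_div_iff₀ (by linarith)]; linarith) (div_le_lfun_zfun hd2 hx)
  obtain ⟨hlo, hhi⟩ := sub_log_lfun_zfun_mem_Icc hd2 hx hroot hd
  exact ⟨sub_one_le_of_le_sub_log hL hℓ hlo, le_add_log_of_sub_log_le (by linarith) hhi⟩

/-- **Asymptotics of the injective norm of a Wigner tensor.** If `x_d ≥ 2√(d-1)` solves
`g_d(z_d(x_d)) = 0` for each `d ≥ 3`, then `μ_d = x_d √(2/d)` satisfies
`μ_d² = 2 log d + 2 log log d + 2 + o(1)` as `d → ∞`. -/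
theorem injective_norm_asymptotics
    (x : ℕ → ℝ)
    (hx : ∀ d : ℕ, 3 ≤ d → 2 * Real.sqrt ((d:ℝ) - 1) ≤ x d)
    (hroot : ∀ d : ℕ, 3 ≤ d → gfun d (zfun d (x d)) = 0) :
    Tendsto (fun d : ℕ =>
        (x d * Real.sqrt (2 / (d:ℝ)))^2
          - (2 * Real.log d + 2 * Real.log (Real.log d) + 2))
      atTop (nhds 0) := by
  set L := fun d : ℕ => lfun d (zfun d (x d))
  have hlog : Tendsto (fun d : ℕ => log d) atTop atTop :=
    tendsto_log_atTop.comp tendsto_natCast_atTop_atTop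
  have hL : ∀ᶠ d : ℕ in atTop, L d ∈ Set.Icc (log d - 1) (log d + log 2 + log (log d)) := by
    filter_upwards [eventually_ge_atTop 3, hlog.eventually_ge_atTop 3] with d hd hℓ
    exact lfun_zfun_mem_Icc hd hℓ (hx d hd) (hroot d hd)
  have hratio : Tendsto (fun d : ℕ => L d / log d) atTop (nhds 1) :=
    tendsto_div_nhds_one_of_mem_Icc hlog hL
  have hLtop : Tendsto L atTop atTop :=
    tendsto_atTop_mono' _ (hL.mono fun _ h => h.1) (tendsto_atTop_add_const_right _ (-1) hlog)
  have hlim : Tendsto (fun d : ℕ => 2 * log (L d / log d) + 2 * (1 - (d:ℝ)⁻¹) / L d)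
      atTop (nhds 0) := by
    simpa using (((continuousAt_log one_ne_zero).tendsto.comp hratio).const_mul 2).add
      (((tendsto_const_nhds.sub tendsto_inv_atTop_nhds_zero_nat).const_mul 2).div_atTop hLtop)
  refine hlim.congr' ?_
  filter_upwards [eventually_ge_atTop 3] with d hd
  exact (sq_mul_sqrt_two_div_sub_eq (by omega) (hx d hd) (hroot d hd)).symm
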